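/- arXiv:2308.09557 — 7 statements merged into one kernel-verified Lean document; each statement's English description precedes it below -/
import Mathlib

section
/- b_σ(Fin, J) ≥ 𝔟 for every ideal J on ω containing Fin; in fact b_σ(Fin) ≥ 𝔟: given a family ℰ ⊆ M_Fin of size less than 𝔟, there is (A_k) ∈ M_Fin dominating every member of ℰ eventually. Equivalently, any witness family for b_σ(Fin) yields a ≤*-unbounded family of functions of the same cardinality. -/
open Set

/-- `I` is an ideal on `α`: closed under subsets and finite unions,
contains all finite sets, does not contain the whole set. -/
def IsIdeal {α : Type*} (I : Set (Set α)) : Prop :=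
  (∀ A B : Set α, A ⊆ B → B ∈ I → A ∈ I) ∧
  (∀ A B : Set α, A ∈ I → B ∈ I → A ∪ B ∈ I) ∧
  (∀ A : Set α, A.Finite → A ∈ I) ∧
  Set.univ ∉ I

/-- `E` is a `⊆`-increasing sequence of members of `I` (the family `M_I`). -/
def MemM {α : Type*} (I : Set (Set α)) (E : ℕ → Set α) : Prop :=
  (∀ k, E k ∈ I) ∧ ∀ k, E k ⊆ E (k + 1)

/-- The cardinal `b_σ(I,J)`, with value `⊤` (i.e. `∞`) if no witness family exists. -/
noncomputable def bSigma {α : Type} (I J : Set (Set α)) : WithTop Cardinal :=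
  sInf {c | ∃ E : Set (ℕ → Set α), (∀ e ∈ E, MemM I e) ∧
    (∀ A : ℕ → Set α, MemM J A → ∃ e ∈ E, {k | ¬ e k ⊆ A k}.Infinite) ∧
    c = (Cardinal.mk E : WithTop Cardinal)}

/-- The cardinal `add_ω(I,J)`, with value `⊤` (i.e. `∞`) if no witness family exists. -/
noncomputable def addOmega {α : Type} (I J : Set (Set α)) : WithTop Cardinal :=
  sInf {c | ∃ A : Set (Set α), A ⊆ I ∧
    (∀ B : ℕ → Set α, (∀ n, B n ∈ J) → ∃ a ∈ A, ∀ n, ¬ a ⊆ B n) ∧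
    c = (Cardinal.mk A : WithTop Cardinal)}

/-- The cardinal `add*(I)`, with value `⊤` (i.e. `∞`) if no witness family exists. -/
noncomputable def addStar {α : Type} (I : Set (Set α)) : WithTop Cardinal :=
  sInf {c | ∃ A : Set (Set α), A ⊆ I ∧
    (∀ B ∈ I, ∃ a ∈ A, (a \ B).Infinite) ∧
    c = (Cardinal.mk A : WithTop Cardinal)}

/-- The cardinal `b_s(I,J,K)`, with value `⊤` (i.e. `∞`) if no witness family exists. -/
noncomputable def bS {α : Type} (I J K : Set (Set α)) : WithTop Cardinal :=
  sInf {c | ∃ E : Set (ℕ → Set α),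
    (∀ e ∈ E, (∀ n, e n ∈ K) ∧ ∀ n k, n ≠ k → e n ∩ e k = ∅) ∧
    (∀ A : ℕ → Set α, (∀ n, A n ∈ J) → (∀ n k, n ≠ k → A n ∩ A k = ∅) →
      (⋃ n, A n) = Set.univ →
      ∃ e ∈ E, (⋃ n, A (n + 1) ∩ ⋃ i ≤ n, e i) ∉ I) ∧
    c = (Cardinal.mk E : WithTop Cardinal)}

/-- The Fubini product `I ⊗ J` of two ideals on `ℕ`. -/
def fubini (I J : Set (Set ℕ)) : Set (Set (ℕ × ℕ)) :=
  {A | {n | {m | (n, m) ∈ A} ∉ J} ∈ I}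

/-- The ideal `Fin` of finite subsets of `ℕ`. -/
def finIdeal : Set (Set ℕ) := {A | A.Finite}

/-- The bounding number `𝔟`: the least cardinality of a `≤*`-unbounded family in `ω^ω`. -/
noncomputable def boundingNumber : Cardinal :=
  sInf {c | ∃ F : Set (ℕ → ℕ), Cardinal.mk F = c ∧
    ∀ g : ℕ → ℕ, ∃ f ∈ F, {n | g n < f n}.Infinite}

/-
Code each finite-set sequence `e` by the function `k ↦ sInf {n | e k ⊆ [0, n)}`. Fewer than `𝔟`
such codes are `≤*`-bounded by a single `g`, which may be taken monotone by passing to its partial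
maxima; then `A k = [0, g k)` lies in `M_Fin` and eventually contains every `e k`. A family
witnessing `b_σ(Fin, J)` cannot be dominated in this way, since `M_Fin ⊆ M_J`.
-/

theorem exists_eventually_ge_of_mk_lt_boundingNumber {F : Set (ℕ → ℕ)}
    (hF : Cardinal.mk F < boundingNumber) :
    ∃ g : ℕ → ℕ, ∀ f ∈ F, {n | g n < f n}.Finite := by
  by_contra! hunb
  exact hF.not_ge <| csInf_le (OrderBot.bddBelow _) ⟨F, rfl, hunb⟩

theorem Set.Finite.subset_Iio_sInf {s : Set ℕ} (hs : s.Finite) :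
    s ⊆ Iio (sInf {n | s ⊆ Iio n}) := by
  obtain ⟨b, hb⟩ := hs.bddAbove
  exact Nat.sInf_mem (s := {n | s ⊆ Iio n}) ⟨b + 1, fun x hx => Nat.lt_succ_of_le (hb hx)⟩

theorem exists_memM_finIdeal_eventually_superset {E : Set (ℕ → Set ℕ)}
    (hE : ∀ e ∈ E, MemM finIdeal e) (hlt : Cardinal.mk E < boundingNumber) :
    ∃ A : ℕ → Set ℕ, MemM finIdeal A ∧ ∀ e ∈ E, {k | ¬ e k ⊆ A k}.Finite := by
  let code : (ℕ → Set ℕ) → ℕ → ℕ := fun e k => sInf {n | e k ⊆ Iio n}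
  obtain ⟨g, hg⟩ := exists_eventually_ge_of_mk_lt_boundingNumber
    (Cardinal.mk_image_le.trans_lt hlt : Cardinal.mk (code '' E) < boundingNumber)
  refine ⟨fun k => Iio (partialSups g k),
    ⟨fun k => finite_Iio _, fun k => Iio_subset_Iio ((partialSups g).monotone k.le_succ)⟩, ?_⟩
  intro e he
  refine (hg (code e) (mem_image_of_mem code he)).subset fun k hk =>
    lt_of_not_ge fun hcode : code e k ≤ g k => hk ?_
  exact ((hE e he).1 k).subset_Iio_sInf.trans <|
    Iio_subset_Iio (hcode.trans (le_partialSups g k))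

theorem boundingNumber_le_bSigma_finIdeal {J : Set (Set ℕ)} (hFJ : finIdeal ⊆ J) :
    (boundingNumber : WithTop Cardinal) ≤ bSigma finIdeal J := by
  refine le_sInf ?_
  rintro _ ⟨E, hE, hwit, rfl⟩
  rw [WithTop.coe_le_coe]
  by_contra! hlt
  obtain ⟨A, hA, hdom⟩ := exists_memM_finIdeal_eventually_superset hE hlt
  obtain ⟨e, he, hinf⟩ := hwit A ⟨fun k => hFJ (hA.1 k), hA.2⟩
  exact hinf (hdom e he)

theorem stmt6_general (J : Set (Set ℕ)) (hFJ : finIdeal ⊆ J) :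
    (∀ E : Set (ℕ → Set ℕ), (∀ e ∈ E, MemM finIdeal e) →
      Cardinal.mk E < boundingNumber →
      ∃ A : ℕ → Set ℕ, MemM finIdeal A ∧ ∀ e ∈ E, {k | ¬ e k ⊆ A k}.Finite) ∧
    (boundingNumber : WithTop Cardinal) ≤ bSigma finIdeal J :=
  ⟨fun _ hE hlt => exists_memM_finIdeal_eventually_superset hE hlt,
    boundingNumber_le_bSigma_finIdeal hFJ⟩

/-- `b_σ(Fin,J) ≥ 𝔟` for every ideal `J ⊇ Fin`: any family in `M_Fin` of size less
than `𝔟` is eventually dominated by a single member of `M_Fin`. -/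
theorem stmt6 (J : Set (Set ℕ)) (hJ : IsIdeal J) (hFJ : finIdeal ⊆ J) :
    (∀ E : Set (ℕ → Set ℕ), (∀ e ∈ E, MemM finIdeal e) →
      Cardinal.mk E < boundingNumber →
      ∃ A : ℕ → Set ℕ, MemM finIdeal A ∧ ∀ e ∈ E, {k | ¬ e k ⊆ A k}.Finite) ∧
    (boundingNumber : WithTop Cardinal) ≤ bSigma finIdeal J :=
  stmt6_general J hFJ
end

section
/- Let I, J be ideals on ω with I ⊆ J. Then the cofinality of b_σ(I,J) is uncountable. -/
open Set

/-! Call a family of sequences dominated when a single `A ∈ M_J` almost contains each member.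
Dominated families are closed under countable unions by a diagonal argument, and since `I ⊆ J`
each single member of `M_I` is dominated; hence every countable subfamily of `M_I` is dominated,
and `b_σ(I,J)` is uncountable. If its cofinality were countable, an undominated family of minimal
size would be a countable union of strictly smaller subfamilies, each dominated by minimality. -/

open Filter Cardinal

theorem Cardinal.exists_iUnion_eq_univ_mk_lt_of_cof_le_aleph0 {α : Type*} (hα : ℵ₀ ≤ #α)
    (hcof : (#α).ord.cof ≤ ℵ₀) : ∃ F : ℕ → Set α, ⋃ n, F n = Set.univ ∧ ∀ n, #(F n) < #α := by
  obtain ⟨φ⟩ : Nonempty (α ≃ (#α).ord.ToType) := Cardinal.eq.1 (mk_ord_toType _).symm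
  obtain ⟨S, hS, hScof⟩ := Order.exists_cof_eq (#α).ord.ToType
  rw [Ordinal.cof_toType] at hScof
  have : Countable S := le_aleph0_iff_subtype_countable.1 (hScof.trans_le hcof)
  have : Nonempty α := (infinite_iff.2 hα).nonempty
  have : Nonempty (#α).ord.ToType := φ.symm.nonempty
  have : Nonempty S := hS.nonempty.to_subtype
  obtain ⟨s, hs⟩ := exists_surjective_nat S
  refine ⟨fun n => φ ⁻¹' Iic (s n : (#α).ord.ToType), eq_univ_of_forall fun x => ?_, fun n => ?_⟩
  · obtain ⟨b, hb, hxb⟩ := hS (φ x)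
    obtain ⟨n, hn⟩ := hs ⟨b, hb⟩
    exact mem_iUnion.2 ⟨n, by simpa [hn] using hxb⟩
  · have hT : #(#α).ord.ToType = #α := mk_ord_toType _
    rw [mk_preimage_equiv]
    exact (mk_Iic_lt _ (by rw [hT, Ordinal.type_toType]) (hT.symm ▸ hα)).trans_eq hT

theorem IsIdeal.biUnion_mem {α ι : Type*} {I : Set (Set α)} (hI : IsIdeal I) {s : Set ι}
    (hs : s.Finite) {f : ι → Set α} (hf : ∀ i ∈ s, f i ∈ I) : ⋃ i ∈ s, f i ∈ I := by
  induction s, hs using Set.Finite.induction_on with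
  | empty => simpa using hI.2.2.1 ∅ finite_empty
  | @insert a s _ _ ih =>
    rw [biUnion_insert]
    exact hI.2.1 _ _ (hf a (mem_insert a s)) (ih fun i hi => hf i (mem_insert_of_mem a hi))

/-- The families counted by `bSigma I J` are the undominated subfamilies of `M_I`. -/
def IsDominated {α : Type*} (J : Set (Set α)) (E : Set (ℕ → Set α)) : Prop :=
  ∃ A, MemM J A ∧ ∀ e ∈ E, ∀ᶠ k in atTop, e k ⊆ A k

theorem not_isDominated_iff {α : Type*} {J : Set (Set α)} {E : Set (ℕ → Set α)} :
    ¬ IsDominated J E ↔ ∀ A, MemM J A → ∃ e ∈ E, {k | ¬ e k ⊆ A k}.Infinite := by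
  simp only [IsDominated, not_exists, not_and, not_forall, not_eventually,
    Nat.frequently_atTop_iff_infinite, exists_prop]

theorem MemM.mono {α : Type*} {I J : Set (Set α)} {e : ℕ → Set α} (he : MemM I e) (hIJ : I ⊆ J) :
    MemM J e :=
  ⟨fun k => hIJ (he.1 k), he.2⟩

theorem isDominated_singleton {α : Type*} {J : Set (Set α)} {e : ℕ → Set α} (he : MemM J e) :
    IsDominated J {e} :=
  ⟨e, he, by simp⟩

/-- Countably many dominated families are dominated together: the sets `A i k` with
`i` among the first `k` indices are merged into one `A k`. -/
theorem IsDominated.iUnion {α ι : Type*} [Countable ι] {J : Set (Set α)} (hJ : IsIdeal J)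
    {E : ι → Set (ℕ → Set α)} (hE : ∀ i, IsDominated J (E i)) : IsDominated J (⋃ i, E i) := by
  choose A hAJ hEA using hE
  obtain ⟨f, hf⟩ := Countable.exists_injective_nat ι
  refine ⟨fun k => ⋃ i ∈ f ⁻¹' Iic k, A i k, ⟨fun k => ?_, fun k => ?_⟩, ?_⟩
  · exact hJ.biUnion_mem ((finite_Iic k).preimage hf.injOn) fun i _ => (hAJ i).1 k
  · exact biUnion_mono (fun i (hi : f i ≤ k) => hi.trans k.le_succ) fun i _ => (hAJ i).2 k
  · simp only [mem_iUnion]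
    rintro e ⟨i, he⟩
    filter_upwards [hEA i e he, eventually_ge_atTop (f i)] with k hk hik
    exact hk.trans (subset_biUnion_of_mem (u := fun i => A i k) hik)

theorem isDominated_of_countable {α : Type*} {J : Set (Set α)} (hJ : IsIdeal J)
    {E : Set (ℕ → Set α)} (hE : E.Countable) (hEJ : ∀ e ∈ E, MemM J e) : IsDominated J E := by
  have : Countable E := hE.to_subtype
  rw [← biUnion_of_singleton E, biUnion_eq_iUnion]
  exact IsDominated.iUnion hJ fun e => isDominated_singleton (hEJ e e.2)

/-- `M_I` itself is undominated: against `A ∈ M_J` take `e k = {x 0, …, x k}` with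
`x k ∉ A k`, which escapes `A k` at every `k`. -/
theorem not_isDominated_memM {α : Type*} {I J : Set (Set α)} (hI : IsIdeal I)
    (hJ : IsIdeal J) : ¬ IsDominated J {e | MemM I e} := by
  rw [not_isDominated_iff]
  intro A hA
  have hcompl : ∀ k, (A k)ᶜ.Nonempty := fun k =>
    nonempty_compl.2 fun h => hJ.2.2.2 (h ▸ hA.1 k)
  choose x hx using hcompl
  refine ⟨fun k => x '' Iic k, ⟨fun k => hI.2.2.1 _ ((finite_Iic k).image x),
    fun k => image_mono (Iic_subset_Iic.2 k.le_succ)⟩, ?_⟩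
  convert infinite_univ (α := ℕ)
  exact eq_univ_of_forall fun k hk => hx k (hk (mem_image_of_mem x self_mem_Iic))

theorem exists_bSigma_eq_mk {α : Type} {I J : Set (Set α)} (hI : IsIdeal I) (hJ : IsIdeal J) :
    ∃ E : Set (ℕ → Set α), (∀ e ∈ E, MemM I e) ∧ ¬ IsDominated J E ∧ bSigma I J = #E := by
  obtain ⟨E, hEI, hEJ, hE⟩ := csInf_mem (s := {c : WithTop Cardinal | ∃ E : Set (ℕ → Set α),
      (∀ e ∈ E, MemM I e) ∧ (∀ A, MemM J A → ∃ e ∈ E, {k | ¬ e k ⊆ A k}.Infinite) ∧ c = #E})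
    ⟨_, _, fun _ => id, not_isDominated_iff.1 (not_isDominated_memM hI hJ), rfl⟩
  exact ⟨E, hEI, not_isDominated_iff.2 hEJ, hE⟩

theorem bSigma_le_mk {α : Type} {I J : Set (Set α)} {E : Set (ℕ → Set α)}
    (hEI : ∀ e ∈ E, MemM I e) (hEJ : ¬ IsDominated J E) : bSigma I J ≤ #E :=
  sInf_le ⟨E, hEI, not_isDominated_iff.1 hEJ, rfl⟩

/-- If `I ⊆ J`, then the cofinality of `b_σ(I,J)` is uncountable
(in particular `b_σ(I,J)` is a genuine cardinal, not `∞`). -/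
theorem stmt7 (I J : Set (Set ℕ)) (hI : IsIdeal I) (hJ : IsIdeal J) (hIJ : I ⊆ J) :
    ∃ c : Cardinal, bSigma I J = (c : WithTop Cardinal) ∧ Cardinal.aleph0 < c.ord.cof := by
  obtain ⟨E, hEI, hEJ, hbE⟩ := exists_bSigma_eq_mk hI hJ
  have hsmall : ∀ F ⊆ E, #F < #E → IsDominated J F := fun F hFE hF => by
    by_contra hFJ
    have := hbE ▸ bSigma_le_mk (fun e he => hEI e (hFE he)) hFJ
    exact hF.not_ge (WithTop.coe_le_coe.1 this)
  have hE : ℵ₀ < #E := by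
    by_contra! hE
    exact hEJ (isDominated_of_countable hJ (le_aleph0_iff_set_countable.1 hE)
      fun e he => (hEI e he).mono hIJ)
  refine ⟨#E, hbE, ?_⟩
  by_contra! hcof
  obtain ⟨F, hFE, hF⟩ := exists_iUnion_eq_univ_mk_lt_of_cof_le_aleph0 hE.le hcof
  refine hEJ ?_
  rw [← Subtype.coe_image_univ E, ← hFE, image_iUnion]
  exact IsDominated.iUnion hJ fun n =>
    hsmall _ (Subtype.coe_image_subset E _) (mk_image_le.trans_lt (hF n))
end

section
/- For every ideal I on ω: b_σ(I) = min{b_s(I), add_ω(I)}, i.e., b_σ(I,I) = min{b_s(I,I,I), add_ω(I,I)}. -/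
open Set

/-!
A sequence `E ∈ M_I` and the pairwise disjoint sequence of its differences `E_n \ E_{n-1}`
determine each other (by partial unions and by `disjointed`), and under this correspondence the
`b_s`-condition for a partition `(A_n)` reads `⋃ₙ A_{n+1} ∩ E_n ∉ I`. A `b_s`-family therefore
yields a `b_σ`-family: given `(A_n) ∈ M_I`, partition `ω` by the differences of `A_n ∪ [0, n]`;
if `E_n ⊆ A_n` for all `n ≥ K`, then `⋃ₙ A_{n+1} ∩ E_n ⊆ E_K ∈ I`. An `add_ω`-family `𝒜`
yields the `b_σ`-family of constant sequences. Conversely, if a `b_σ`-family `ℰ` does not give a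
`b_s`-family, some partition `(P_n) ∈ P_I` has `S_E = ⋃ₙ P_{n+1} ∩ E_n ∈ I` for all `E ∈ ℰ`, and
these sets form an `add_ω`-family: if `S_E ⊆ B_{N_E}` for all `E`, then
`E_k ⊆ ⋃_{i ≤ k} P_i ∪ ⋃_{i ≤ k} B_i` for all `k ≥ N_E`, contradicting that `ℰ` is a
`b_σ`-family.
-/

open Set Filter Function

variable {α : Type}

section Sequences

variable {I : Set (Set α)}

lemma IsIdeal.mono (hI : IsIdeal I) {A B : Set α} (hAB : A ⊆ B) (hB : B ∈ I) : A ∈ I :=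
  hI.1 A B hAB hB

lemma IsIdeal.union_mem (hI : IsIdeal I) {A B : Set α} (hA : A ∈ I) (hB : B ∈ I) : A ∪ B ∈ I :=
  hI.2.1 A B hA hB

lemma IsIdeal.finite_mem (hI : IsIdeal I) {A : Set α} (hA : A.Finite) : A ∈ I :=
  hI.2.2.1 A hA

lemma IsIdeal.accumulate_mem (hI : IsIdeal I) {e : ℕ → Set α} (he : ∀ n, e n ∈ I) (n : ℕ) :
    accumulate e n ∈ I := by
  induction n with
  | zero => simpa only [accumulate_zero_nat] using he 0
  | succ n ih => simpa only [accumulate_succ] using hI.union_mem ih (he (n + 1))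

lemma MemM.monotone {e : ℕ → Set α} (he : MemM I e) : Monotone e :=
  monotone_nat_of_le_succ he.2

lemma IsIdeal.memM_accumulate (hI : IsIdeal I) {e : ℕ → Set α} (he : ∀ n, e n ∈ I) :
    MemM I (accumulate e) :=
  ⟨hI.accumulate_mem he, fun n => monotone_accumulate n.le_succ⟩

lemma accumulate_disjointed_of_monotone {e : ℕ → Set α} (he : Monotone e) :
    accumulate (disjointed e) = e := by
  rw [← partialSups_eq_accumulate, partialSups_disjointed, he.partialSups_eq]

lemma disjoint_disjointed_self_of_lt {e : ℕ → Set α} {m n : ℕ} (h : m < n) :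
    Disjoint (disjointed e n) (e m) :=
  disjoint_sdiff_self_left.mono_right (Finset.le_sup (f := e) (Finset.mem_Iio.2 h))

lemma pairwise_inter_eq_empty_iff {e : ℕ → Set α} :
    (∀ n k, n ≠ k → e n ∩ e k = ∅) ↔ Pairwise (Disjoint on e) := by
  simp only [Pairwise, Function.onFun, disjoint_iff_inter_eq_empty]

end Sequences

section Families

/-- Membership in `P̂_K`. -/
def MemPHat (K : Set (Set α)) (e : ℕ → Set α) : Prop :=
  (∀ n, e n ∈ K) ∧ Pairwise (Disjoint on e)

/-- Membership in `P_J`. -/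
def MemP (J : Set (Set α)) (A : ℕ → Set α) : Prop :=
  MemPHat J A ∧ ⋃ n, A n = univ

def IsBSigmaFamily (I J : Set (Set α)) (ℰ : Set (ℕ → Set α)) : Prop :=
  (∀ e ∈ ℰ, MemM I e) ∧ ∀ A, MemM J A → ∃ e ∈ ℰ, {k | ¬ e k ⊆ A k}.Infinite

def IsBsFamily (I J K : Set (Set α)) (ℰ : Set (ℕ → Set α)) : Prop :=
  (∀ e ∈ ℰ, MemPHat K e) ∧
    ∀ A, MemP J A → ∃ e ∈ ℰ, (⋃ n, A (n + 1) ∩ accumulate e n) ∉ I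

def IsAddOmegaFamily (I J : Set (Set α)) (𝒜 : Set (Set α)) : Prop :=
  𝒜 ⊆ I ∧ ∀ B : ℕ → Set α, (∀ n, B n ∈ J) → ∃ a ∈ 𝒜, ∀ n, ¬ a ⊆ B n

variable {I J K : Set (Set α)} {c : WithTop Cardinal}

lemma bSigma_le {ℰ : Set (ℕ → Set α)} (h : IsBSigmaFamily I J ℰ) :
    bSigma I J ≤ Cardinal.mk ℰ :=
  sInf_le ⟨ℰ, h.1, h.2, rfl⟩

lemma le_bSigma (h : ∀ ℰ, IsBSigmaFamily I J ℰ → c ≤ Cardinal.mk ℰ) : c ≤ bSigma I J :=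
  le_sInf <| by rintro _ ⟨ℰ, h₁, h₂, rfl⟩; exact h ℰ ⟨h₁, h₂⟩

lemma bS_le {ℰ : Set (ℕ → Set α)} (h : IsBsFamily I J K ℰ) : bS I J K ≤ Cardinal.mk ℰ :=
  sInf_le ⟨ℰ, fun e he => ⟨(h.1 e he).1, pairwise_inter_eq_empty_iff.2 (h.1 e he).2⟩,
    fun A hA hd hu => h.2 A ⟨⟨hA, pairwise_inter_eq_empty_iff.1 hd⟩, hu⟩, rfl⟩

lemma le_bS (h : ∀ ℰ, IsBsFamily I J K ℰ → c ≤ Cardinal.mk ℰ) : c ≤ bS I J K :=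
  le_sInf <| by
    rintro _ ⟨ℰ, h₁, h₂, rfl⟩
    exact h ℰ ⟨fun e he => ⟨(h₁ e he).1, pairwise_inter_eq_empty_iff.1 (h₁ e he).2⟩,
      fun A hA => h₂ A hA.1.1 (pairwise_inter_eq_empty_iff.2 hA.1.2) hA.2⟩

lemma addOmega_le {𝒜 : Set (Set α)} (h : IsAddOmegaFamily I J 𝒜) :
    addOmega I J ≤ Cardinal.mk 𝒜 :=
  sInf_le ⟨𝒜, h.1, h.2, rfl⟩

lemma le_addOmega (h : ∀ 𝒜, IsAddOmegaFamily I J 𝒜 → c ≤ Cardinal.mk 𝒜) : c ≤ addOmega I J :=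
  le_sInf <| by rintro _ ⟨𝒜, h₁, h₂, rfl⟩; exact h 𝒜 ⟨h₁, h₂⟩

lemma mk_image_le_withTop {β γ : Type} (f : β → γ) (s : Set β) :
    ((Cardinal.mk (f '' s) : Cardinal) : WithTop Cardinal) ≤ Cardinal.mk s :=
  WithTop.coe_le_coe.2 Cardinal.mk_image_le

end Families

section UpperBounds

variable {I J : Set (Set α)}

lemma IsAddOmegaFamily.isBSigmaFamily_image_const {𝒜 : Set (Set α)}
    (h : IsAddOmegaFamily I J 𝒜) : IsBSigmaFamily I J ((fun a _ => a) '' 𝒜) := by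
  refine ⟨by rintro _ ⟨a, ha, rfl⟩; exact ⟨fun _ => h.1 ha, fun _ => subset_rfl⟩, fun A hA => ?_⟩
  obtain ⟨a, ha, hna⟩ := h.2 A hA.1
  refine ⟨fun _ => a, mem_image_of_mem _ ha, ?_⟩
  exact infinite_univ.mono fun k _ => hna k

theorem bSigma_le_addOmega (I J : Set (Set α)) : bSigma I J ≤ addOmega I J :=
  le_addOmega fun _ h => (bSigma_le h.isBSigmaFamily_image_const).trans (mk_image_le_withTop _ _)

/-- Adding `Iic k` to `A k` makes the pieces cover `ℕ`. -/
lemma MemM.memP_disjointed_union_Iic {I : Set (Set ℕ)} (hI : IsIdeal I) {A : ℕ → Set ℕ}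
    (hA : MemM I A) : MemP I (disjointed fun k => A k ∪ Iic k) :=
  ⟨⟨fun k => hI.mono (disjointed_subset _ k)
      (hI.union_mem (hA.1 k) (hI.finite_mem (finite_Iic k))),
    disjoint_disjointed _⟩,
    by
      rw [iUnion_disjointed]
      exact eq_univ_of_forall fun x => mem_iUnion.2 ⟨x, Or.inr (mem_Iic.2 le_rfl)⟩⟩

lemma iUnion_succ_inter_subset_of_eventually_subset {P A T : ℕ → Set α}
    (hP : ∀ n, Disjoint (P (n + 1)) (A n)) (hT : Monotone T) {K : ℕ}
    (hK : ∀ n, K ≤ n → T n ⊆ A n) : ⋃ n, P (n + 1) ∩ T n ⊆ T K := by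
  refine iUnion_subset fun n x ⟨hxP, hxT⟩ => ?_
  rcases lt_or_ge n K with hn | hn
  · exact hT hn.le hxT
  · exact absurd (hK n hn hxT) (disjoint_left.1 (hP n) hxP)

lemma IsBsFamily.isBSigmaFamily_image_accumulate {I : Set (Set ℕ)} (hI : IsIdeal I)
    {ℰ : Set (ℕ → Set ℕ)} (h : IsBsFamily I I I ℰ) : IsBSigmaFamily I I (accumulate '' ℰ) := by
  refine ⟨by rintro _ ⟨e, he, rfl⟩; exact hI.memM_accumulate (h.1 e he).1, fun A hA => ?_⟩
  obtain ⟨e, he, hS⟩ := h.2 _ (hA.memP_disjointed_union_Iic hI)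
  refine ⟨accumulate e, mem_image_of_mem _ he, ?_⟩
  by_contra hfin
  rw [← Nat.frequently_atTop_iff_infinite, not_frequently, eventually_atTop] at hfin
  obtain ⟨K, hK⟩ := hfin
  refine hS (hI.mono ?_ (hI.accumulate_mem (h.1 e he).1 K))
  refine iUnion_succ_inter_subset_of_eventually_subset (fun n => ?_) monotone_accumulate
    fun n hn => not_not.1 (hK n hn)
  exact (disjoint_disjointed_self_of_lt n.lt_succ_self).mono_right subset_union_left

theorem bSigma_le_bS {I : Set (Set ℕ)} (hI : IsIdeal I) : bSigma I I ≤ bS I I I :=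
  le_bS fun _ h =>
    (bSigma_le (h.isBSigmaFamily_image_accumulate hI)).trans (mk_image_le_withTop _ _)

end UpperBounds

section LowerBound

variable {I : Set (Set α)} {ℰ : Set (ℕ → Set α)}

lemma MemM.memPHat_disjointed (hI : IsIdeal I) {e : ℕ → Set α} (he : MemM I e) :
    MemPHat I (disjointed e) :=
  ⟨fun n => hI.mono (disjointed_subset e n) (he.1 n), disjoint_disjointed e⟩

lemma IsBSigmaFamily.exists_memP_of_not_isBsFamily (hI : IsIdeal I) (h : IsBSigmaFamily I I ℰ)
    (hbs : ¬ IsBsFamily I I I (disjointed '' ℰ)) :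
    ∃ P, MemP I P ∧ ∀ e ∈ ℰ, (⋃ n, P (n + 1) ∩ e n) ∈ I := by
  simp only [IsBsFamily, not_and, not_forall, not_exists, not_not] at hbs
  obtain ⟨P, hP, hS⟩ := hbs (by rintro _ ⟨e, he, rfl⟩; exact (h.1 e he).memPHat_disjointed hI)
  refine ⟨P, hP, fun e he => ?_⟩
  simpa only [accumulate_disjointed_of_monotone (h.1 e he).monotone] using
    hS _ (mem_image_of_mem _ he)

lemma subset_accumulate_union_of_iUnion_succ_inter_subset {P e : ℕ → Set α} {B : Set α}
    (hP : ⋃ n, P n = univ) (he : Monotone e) (hB : ⋃ n, P (n + 1) ∩ e n ⊆ B) (k : ℕ) :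
    e k ⊆ accumulate P k ∪ B := by
  intro x hx
  obtain ⟨m, hm⟩ := mem_iUnion.1 (hP ▸ mem_univ x)
  rcases le_or_gt m k with hmk | hkm
  · exact Or.inl (mem_accumulate.2 ⟨m, hmk, hm⟩)
  · obtain ⟨j, rfl⟩ := Nat.exists_eq_add_of_lt hkm
    exact Or.inr (hB (mem_iUnion.2 ⟨k + j, hm, he (Nat.le_add_right k j) hx⟩))

lemma IsBSigmaFamily.isAddOmegaFamily_image (hI : IsIdeal I) (h : IsBSigmaFamily I I ℰ)
    {P : ℕ → Set α} (hP : MemP I P) (hS : ∀ e ∈ ℰ, (⋃ n, P (n + 1) ∩ e n) ∈ I) :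
    IsAddOmegaFamily I I ((fun e => ⋃ n, P (n + 1) ∩ e n) '' ℰ) := by
  refine ⟨by rintro _ ⟨e, he, rfl⟩; exact hS e he, fun B hB => ?_⟩
  by_contra! hcov
  have hA : MemM I fun k => accumulate P k ∪ accumulate B k :=
    ⟨fun k => hI.union_mem (hI.accumulate_mem hP.1.1 k) (hI.accumulate_mem hB k),
      fun k => union_subset_union (monotone_accumulate k.le_succ) (monotone_accumulate k.le_succ)⟩
  obtain ⟨e, he, hinf⟩ := h.2 _ hA
  obtain ⟨N, hN⟩ := hcov _ (mem_image_of_mem _ he)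
  refine hinf ((finite_Iio N).subset fun k hk => mem_Iio.2 <| not_le.1 fun hNk => hk ?_)
  exact (subset_accumulate_union_of_iUnion_succ_inter_subset hP.2 (h.1 e he).monotone hN k).trans
    (union_subset_union_right _ (subset_accumulate.trans (monotone_accumulate hNk)))

theorem min_bS_addOmega_le_bSigma (hI : IsIdeal I) :
    min (bS I I I) (addOmega I I) ≤ bSigma I I := by
  refine le_bSigma fun ℰ h => ?_
  by_cases hbs : IsBsFamily I I I (disjointed '' ℰ)
  · exact min_le_left _ _ |>.trans <| (bS_le hbs).trans (mk_image_le_withTop _ _)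
  · obtain ⟨P, hP, hS⟩ := h.exists_memP_of_not_isBsFamily hI hbs
    exact min_le_right _ _ |>.trans <|
      (addOmega_le (h.isAddOmegaFamily_image hI hP hS)).trans (mk_image_le_withTop _ _)

end LowerBound

/-- For every ideal `I` on `ω`: `b_σ(I) = min{b_s(I), add_ω(I)}`. -/
theorem stmt8 (I : Set (Set ℕ)) (hI : IsIdeal I) :
    bSigma I I = min (bS I I I) (addOmega I I) :=
  le_antisymm (le_min (bSigma_le_bS hI) (bSigma_le_addOmega I I)) (min_bS_addOmega_le_bSigma hI)
end

section
/- If I is a P-ideal on ω, then add_ω(I) = add*(I). -/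
open Set

section Unbounded

variable {α : Type*}

def OmegaUnbounded (J A : Set (Set α)) : Prop :=
  ∀ B : ℕ → Set α, (∀ n, B n ∈ J) → ∃ a ∈ A, ∀ n, ¬ a ⊆ B n

def StarUnbounded (I A : Set (Set α)) : Prop :=
  ∀ B ∈ I, ∃ a ∈ A, (a \ B).Infinite

theorem OmegaUnbounded.of_starUnbounded {I A : Set (Set α)}
    (hP : ∀ B : ℕ → Set α, (∀ n, B n ∈ I) → ∃ C ∈ I, ∀ n, (B n \ C).Finite)
    (hA : StarUnbounded I A) : OmegaUnbounded I A := by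
  intro B hB
  obtain ⟨C, hCI, hBC⟩ := hP B hB
  obtain ⟨a, ha, haC⟩ := hA C hCI
  refine ⟨a, ha, fun n hsub => haC ((hBC n).subset ?_)⟩
  exact sdiff_subset_sdiff_left hsub

end Unbounded

/-- A finite `a \ B` lies in some `Iic n`, so `a ⊆ B ∪ Iic n`. -/
theorem StarUnbounded.of_omegaUnbounded {I A : Set (Set ℕ)} (hI : IsIdeal I)
    (hA : OmegaUnbounded I A) : StarUnbounded I A := by
  intro B hB
  obtain ⟨a, ha, ha_not_sub⟩ :=
    hA (fun n => B ∪ Iic n) (fun n => hI.2.1 _ _ hB (hI.2.2.1 _ (finite_Iic n)))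
  refine ⟨a, ha, fun hfin => ?_⟩
  obtain ⟨N, hN⟩ := hfin.bddAbove
  exact ha_not_sub N fun x hx => (em (x ∈ B)).imp id fun hxB => hN ⟨hx, hxB⟩

theorem omegaUnbounded_iff_starUnbounded {I A : Set (Set ℕ)} (hI : IsIdeal I)
    (hP : ∀ B : ℕ → Set ℕ, (∀ n, B n ∈ I) → ∃ C ∈ I, ∀ n, (B n \ C).Finite) :
    OmegaUnbounded I A ↔ StarUnbounded I A :=
  ⟨StarUnbounded.of_omegaUnbounded hI, OmegaUnbounded.of_starUnbounded hP⟩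

/-- If `I` is a P-ideal on `ω`, then `add_ω(I) = add*(I)`. -/
theorem stmt10 (I : Set (Set ℕ)) (hI : IsIdeal I)
    (hP : ∀ A : ℕ → Set ℕ, (∀ n, A n ∈ I) → ∃ B ∈ I, ∀ n, (A n \ B).Finite) :
    addOmega I I = addStar I := by
  unfold addOmega addStar
  congr 1
  ext c
  exact exists_congr fun A => and_congr_right fun _ =>
    and_congr_left fun _ => omegaUnbounded_iff_starUnbounded hI hP
end

section
/- For any ideals I, J on ω: b_σ(I ⊗ J) ≤ b_σ(I), where I ⊗ J is the Fubini product ideal on ω × ω. -/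
open Set

/-! A sequence `(E_k)` in `M_I` is sent to `(E_k × ω)` in `M_{I ⊗ J}`, and a sequence `(A_k)` in
`M_{I ⊗ J}` to the sets `{n | (A_k)_n ∉ J}` in `M_I`. Since `J` is proper, `E_k × ω ⊆ A_k` forces
`E_k ⊆ {n | (A_k)_n ∉ J}`, so a family witnessing `b_σ(I)` is carried to one witnessing
`b_σ(I ⊗ J)` of no larger size. -/

theorem bSigma_le_bSigma_of_map {α β : Type} {I J : Set (Set α)} {K L : Set (Set β)}
    (f : Set α → Set β) (g : Set β → Set α) (hf : Monotone f) (hfI : MapsTo f I K)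
    (hg : Monotone g) (hgL : MapsTo g L J) (hfg : ∀ a b, f a ⊆ b → a ⊆ g b) :
    bSigma K L ≤ bSigma I J := by
  refine le_sInf ?_
  rintro _ ⟨E, hE, hcov, rfl⟩
  calc bSigma K L ≤ (Cardinal.mk ((f ∘ ·) '' E) : WithTop Cardinal) := by
        refine sInf_le ⟨(f ∘ ·) '' E, ?_, ?_, rfl⟩
        · rintro _ ⟨e, he, rfl⟩
          exact ⟨fun k => hfI ((hE e he).1 k), fun k => hf ((hE e he).2 k)⟩
        · intro A hA
          obtain ⟨e, he, hinf⟩ :=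
            hcov (g ∘ A) ⟨fun k => hgL (hA.1 k), fun k => hg (hA.2 k)⟩
          exact ⟨f ∘ e, mem_image_of_mem _ he,
            hinf.mono fun _ hk hsub => (hk : ¬ _) (hfg _ _ hsub)⟩
    _ ≤ Cardinal.mk E := by exact_mod_cast Cardinal.mk_image_le

section Sections

variable {α β : Type*} {J : Set (Set β)}

def sectionsNotIn (J : Set (Set β)) (A : Set (α × β)) : Set α := {a | {b | (a, b) ∈ A} ∉ J}

theorem sectionsNotIn_mono (hJ : ∀ A B : Set β, A ⊆ B → B ∈ J → A ∈ J) :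
    Monotone (sectionsNotIn (α := α) J) :=
  fun _ _ hAB _ ha hb => ha (hJ _ _ (fun _ hm => hAB hm) hb)

theorem subset_sectionsNotIn_of_prod_univ_subset (hJ : univ ∉ J) {s : Set α}
    {A : Set (α × β)} (h : s ×ˢ univ ⊆ A) : s ⊆ sectionsNotIn J A := by
  intro a ha hJA
  have : {b | (a, b) ∈ A} = univ := eq_univ_of_forall fun b => h ⟨ha, trivial⟩
  exact hJ (this ▸ hJA)

theorem sectionsNotIn_prod_univ (hJ₀ : ∅ ∈ J) (hJ : univ ∉ J) (s : Set α) :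
    sectionsNotIn J (s ×ˢ (univ : Set β)) = s := by
  refine (subset_sectionsNotIn_of_prod_univ_subset hJ subset_rfl).antisymm' fun a ha => ?_
  by_contra has
  have : {b | (a, b) ∈ s ×ˢ (univ : Set β)} = ∅ := by simp [has]
  exact ha (this ▸ hJ₀)

end Sections

theorem mem_fubini_iff {I J : Set (Set ℕ)} {A : Set (ℕ × ℕ)} :
    A ∈ fubini I J ↔ sectionsNotIn J A ∈ I := Iff.rfl

theorem stmt12_general (I J : Set (Set ℕ)) (hJ : IsIdeal J) :
    bSigma (fubini I J) (fubini I J) ≤ bSigma I I := by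
  obtain ⟨hJ_down, -, hJ_fin, hJ_univ⟩ := hJ
  have hJ_empty : ∅ ∈ J := hJ_fin ∅ finite_empty
  have prod_univ_mem_fubini : MapsTo (· ×ˢ univ) I (fubini I J) := fun s hs => by
    rwa [mem_fubini_iff, sectionsNotIn_prod_univ hJ_empty hJ_univ]
  exact bSigma_le_bSigma_of_map (· ×ˢ univ) (sectionsNotIn J)
    (fun _ _ => prod_mono_left) prod_univ_mem_fubini (sectionsNotIn_mono hJ_down)
    (fun _ => mem_fubini_iff.1)
    (fun _ _ => subset_sectionsNotIn_of_prod_univ_subset hJ_univ)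

/-- `b_σ(I ⊗ J) ≤ b_σ(I)` for all ideals `I, J` on `ω`. -/
theorem stmt12 (I J : Set (Set ℕ)) (hI : IsIdeal I) (hJ : IsIdeal J) :
    bSigma (fubini I J) (fubini I J) ≤ bSigma I I :=
  stmt12_general I J hJ
end

section
/- For any ideals I, J on ω: b_σ(I ⊗ J) ≤ b_σ(J). -/
open Set

/-!
Map each `e` of a witness family for `b_σ(J)` to `k ↦ ω × e_k`, which lies in `M_{I ⊗ J}`.
Given `(A_k) ∈ M_{I ⊗ J}`, each `A_k` has a section `(A_k)_{n_k} ∈ J` (otherwise its set of bad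
columns would be `ω`, which is not in `I`), and the partial unions `B_k` of these sections form a
sequence in `M_J`. Since `ω × e_k ⊆ A_k` forces `e_k ⊆ (A_k)_{n_k} ⊆ B_k`, an `e` escaping `(B_k)`
infinitely often has an image escaping `(A_k)` infinitely often.
-/

theorem IsIdeal.empty_mem {α : Type*} {I : Set (Set α)} (hI : IsIdeal I) : ∅ ∈ I :=
  hI.2.2.1 ∅ finite_empty

theorem IsIdeal.accumulate_mem_s13 {α : Type*} {J : Set (Set α)} (hJ : IsIdeal J)
    {s : ℕ → Set α} (hs : ∀ n, s n ∈ J) (n : ℕ) : accumulate s n ∈ J := by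
  induction n with
  | zero => simpa using hs 0
  | succ n ih => rw [accumulate_succ]; exact hJ.2.1 _ _ ih (hs _)

theorem IsIdeal.memM_accumulate_s13 {α : Type*} {J : Set (Set α)} (hJ : IsIdeal J)
    {s : ℕ → Set α} (hs : ∀ n, s n ∈ J) : MemM J (accumulate s) :=
  ⟨hJ.accumulate_mem_s13 hs, fun _ => monotone_accumulate (Nat.le_succ _)⟩

theorem bSigma_le_bSigma_of_map_s13 {α β : Type} {I J : Set (Set α)} {I' J' : Set (Set β)}
    (Φ : (ℕ → Set α) → ℕ → Set β) (hΦ : ∀ e, MemM I e → MemM I' (Φ e))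
    (hdom : ∀ A, MemM J' A → ∃ B, MemM J B ∧ ∀ e k, Φ e k ⊆ A k → e k ⊆ B k) :
    bSigma I' J' ≤ bSigma I J := by
  refine sInf_le_sInf_of_isCoinitialFor ?_
  rintro _ ⟨E, hEM, hEesc, rfl⟩
  refine ⟨_, ⟨Φ '' E, ?_, ?_, rfl⟩, by exact_mod_cast Cardinal.mk_image_le⟩
  · rintro _ ⟨e, he, rfl⟩
    exact hΦ e (hEM e he)
  · intro A hA
    obtain ⟨B, hB, hΦB⟩ := hdom A hA
    obtain ⟨e, he, hesc⟩ := hEesc B hB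
    exact ⟨Φ e, mem_image_of_mem Φ he,
      hesc.mono fun k (hk : ¬ e k ⊆ B k) hsub => hk (hΦB e k hsub)⟩

theorem univ_prod_mem_fubini {I J : Set (Set ℕ)} (hI : ∅ ∈ I) {S : Set ℕ} (hS : S ∈ J) :
    univ ×ˢ S ∈ fubini I J := by
  have hgood : {n | {m | (n, m) ∈ (univ ×ˢ S : Set (ℕ × ℕ))} ∉ J} = ∅ := by
    simp [mem_prod, hS]
  simpa only [fubini, mem_ofPred_eq, hgood] using hI

theorem exists_section_mem_of_mem_fubini {I J : Set (Set ℕ)} (hI : univ ∉ I)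
    {A : Set (ℕ × ℕ)} (hA : A ∈ fubini I J) : ∃ n, {m | (n, m) ∈ A} ∈ J := by
  by_contra! hbad
  exact hI (by simpa [fubini, hbad] using hA)

/-- `b_σ(I ⊗ J) ≤ b_σ(J)` for all ideals `I, J` on `ω`. -/
theorem stmt13 (I J : Set (Set ℕ)) (hI : IsIdeal I) (hJ : IsIdeal J) :
    bSigma (fubini I J) (fubini I J) ≤ bSigma J J := by
  refine bSigma_le_bSigma_of_map_s13 (fun e k => univ ×ˢ e k) ?_ ?_
  · exact fun e he => ⟨fun k => univ_prod_mem_fubini hI.empty_mem (he.1 k),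
      fun k => prod_mono subset_rfl (he.2 k)⟩
  · intro A hA
    choose n hn using fun k => exists_section_mem_of_mem_fubini hI.2.2.2 (hA.1 k)
    refine ⟨accumulate (fun k => {m | (n k, m) ∈ A k}), hJ.memM_accumulate_s13 hn, ?_⟩
    intro e k hsub m hm
    exact subset_accumulate (hsub ⟨mem_univ (n k), hm⟩)
end

section
/- Let I be an ideal on ω, X a topological space with X = ⋃_{α<κ} X_α, and (f_n) a sequence of continuous real-valued functions on X. If κ < b_s(I) (the least cardinality of a non-(I,I,I)-QN witness) and for each α < κ the restricted sequence (f_n ↾ X_α) converges I-quasi-normally to 0, then (f_n) converges I-quasi-normally to 0 on X. -/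
open Set

/-!
Pick a witness `ε_a` for every piece `X_a`. As there are fewer than `b_s(I)` of them, the functions
`a ↦ ε_a(n)` on the discrete index set converge `I`-quasi-normally: one `I`-null sequence `e`
satisfies `ε_a(n) < e_n` for `I`-almost all `n`, for every `a`, and such an `e` witnesses
quasi-normal convergence on all of `X`. On a set `S` of size `< b_s(I)` the quasi-normal witness
comes from a single partition `(A_k)` of `ω` into members of `I` that `b_s(I)` provides for the
disjointified level sets `{n | 1/(k+2) ≤ |φ_n(s)|}`, `s ∈ S`: put `e_n = 1/(k+1)` on `A_k`.
-/

namespace IsIdeal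

variable {α : Type*} {I : Set (Set α)}

theorem mono_s19 (hI : IsIdeal I) {A B : Set α} (hAB : A ⊆ B) (hB : B ∈ I) : A ∈ I :=
  hI.1 A B hAB hB

theorem union_mem_s19 (hI : IsIdeal I) {A B : Set α} (hA : A ∈ I) (hB : B ∈ I) : A ∪ B ∈ I :=
  hI.2.1 A B hA hB

theorem biUnion_le_mem (hI : IsIdeal I) {A : ℕ → Set α} (hA : ∀ i, A i ∈ I) (m : ℕ) :
    (⋃ i ≤ m, A i) ∈ I := by
  induction m with
  | zero => simpa only [Nat.le_zero, iUnion_iUnion_eq_left] using hA 0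
  | succ m ih => simpa only [biUnion_le_succ] using hI.union_mem_s19 ih (hA (m + 1))

end IsIdeal

theorem subset_biUnion_le_disjointed {α : Type*} (f : ℕ → Set α) (m : ℕ) :
    f m ⊆ ⋃ i ≤ m, disjointed f i := by
  have h := le_partialSups f m
  rwa [← partialSups_disjointed, partialSups_eq_biSup] at h

theorem exists_partition_of_card_lt_bS {α S : Type} {I J K : Set (Set α)}
    (hS : (Cardinal.mk S : WithTop Cardinal) < bS I J K) (E : S → ℕ → Set α)
    (hEK : ∀ s n, E s n ∈ K) (hE : ∀ s, Pairwise (Function.onFun Disjoint (E s))) :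
    ∃ A : ℕ → Set α, (∀ n, A n ∈ J) ∧ (⋃ n, A n) = univ ∧
      ∀ s, (⋃ n, A (n + 1) ∩ ⋃ i ≤ n, E s i) ∈ I := by
  by_contra! h
  refine hS.not_ge (le_trans (sInf_le ⟨range E, ?_, ?_, rfl⟩)
    (WithTop.coe_le_coe.mpr Cardinal.mk_range_le))
  · rintro _ ⟨s, rfl⟩
    exact ⟨hEK s, fun n k hnk => disjoint_iff_inter_eq_empty.mp (hE s hnk)⟩
  · intro A hAJ _ hAcov
    obtain ⟨s, hs⟩ := h A hAJ hAcov
    exact ⟨E s, mem_range_self s, hs⟩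

theorem exists_quasiNormal_of_card_lt_bS {I : Set (Set ℕ)} (hI : IsIdeal I) {S : Type}
    (hS : (Cardinal.mk S : WithTop Cardinal) < bS I I I) (φ : ℕ → S → ℝ)
    (hφ : ∀ s, ∀ ε : ℝ, 0 < ε → {n | ε ≤ |φ n s|} ∈ I) :
    ∃ e : ℕ → ℝ, (∀ n, 0 < e n) ∧ (∀ ε : ℝ, 0 < ε → {n | ε ≤ e n} ∈ I) ∧
      ∀ s, {n | e n ≤ |φ n s|} ∈ I := by
  -- The level of `E s k` is the value of `e` on `A (k + 1)`, matching the shift in the definition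
  -- of `bS`, which only controls `A (n + 1) ∩ ⋃ i ≤ n, E s i`.
  set E : S → ℕ → Set ℕ := fun s k => {n | 1 / ((k : ℝ) + 2) ≤ |φ n s|}
  obtain ⟨A, hAI, hAcov, hA⟩ := exists_partition_of_card_lt_bS hS (fun s => disjointed (E s))
    (fun s k => hI.mono_s19 (disjointed_le _ k) (hφ s _ (by positivity)))
    (fun s => disjoint_disjointed _)
  choose K hK using fun n => mem_iUnion.mp (hAcov ▸ mem_univ n)
  refine ⟨fun n => 1 / ((K n : ℝ) + 1), fun n => by positivity, fun ε hε => ?_, fun s => ?_⟩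
  · refine hI.mono_s19 (fun n hn => mem_biUnion (x := K n) ?_ (hK n)) (hI.biUnion_le_mem hAI ⌈1 / ε⌉₊)
    have hKε : (K n : ℝ) + 1 ≤ 1 / ε := (le_one_div hε (by positivity)).mp hn
    have : (K n : ℝ) ≤ ⌈1 / ε⌉₊ := by linarith [Nat.le_ceil (1 / ε)]
    exact_mod_cast this
  · refine hI.mono_s19 (fun n hn => ?_) (hI.union_mem_s19 (hφ s 1 one_pos) (hA s))
    rcases hKn : K n with _ | m
    · left
      simpa [hKn] using hn
    · right
      have hnE : n ∈ E s m := by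
        simp only [E, mem_ofPred_eq, hKn] at hn ⊢
        push_cast at hn
        rwa [add_assoc, one_add_one_eq_two] at hn
      exact mem_iUnion.mpr ⟨m, hKn ▸ hK n, subset_biUnion_le_disjointed _ m hnE⟩

theorem stmt19_general (I : Set (Set ℕ)) (hI : IsIdeal I)
    (X : Type) (ι : Type) (Xa : ι → Set X)
    (hcov : (⋃ a, Xa a) = Set.univ)
    (hk : (Cardinal.mk ι : WithTop Cardinal) < bS I I I)
    (f : ℕ → X → ℝ)
    (hqn : ∀ a : ι, ∃ e : ℕ → ℝ, (∀ n, 0 < e n) ∧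
      (∀ ε : ℝ, 0 < ε → {n | ε ≤ e n} ∈ I) ∧
      ∀ x ∈ Xa a, {n | e n ≤ |f n x|} ∈ I) :
    ∃ e : ℕ → ℝ, (∀ n, 0 < e n) ∧ (∀ ε : ℝ, 0 < ε → {n | ε ≤ e n} ∈ I) ∧
      ∀ x : X, {n | e n ≤ |f n x|} ∈ I := by
  choose ε hε_pos hε_conv hε_qn using hqn
  obtain ⟨e, he_pos, he_conv, he_dom⟩ := exists_quasiNormal_of_card_lt_bS hI hk (fun n a => ε a n)
    (fun a δ hδ => by simpa only [abs_of_pos (hε_pos a _)] using hε_conv a δ hδ)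
  refine ⟨e, he_pos, he_conv, fun x => ?_⟩
  obtain ⟨a, hxa⟩ := mem_iUnion.mp (hcov ▸ mem_univ x)
  refine hI.mono_s19 (fun n hn => ?_) (hI.union_mem_s19 (hε_qn a x hxa) (he_dom a))
  change e n ≤ |f n x| at hn
  change ε a n ≤ |f n x| ∨ e n ≤ |ε a n|
  rw [abs_of_pos (hε_pos a n)]
  exact (le_or_gt (ε a n) |f n x|).imp_right fun h => hn.trans h.le

/-- If `X = ⋃_{α<κ} X_α` with `κ < b_s(I)` and each `(f_n ↾ X_α)` converges
`I`-quasi-normally to `0`, then `(f_n)` converges `I`-quasi-normally to `0` on `X`. -/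
theorem stmt19 (I : Set (Set ℕ)) (hI : IsIdeal I)
    (X : Type) [TopologicalSpace X] (ι : Type) (Xa : ι → Set X)
    (hcov : (⋃ a, Xa a) = Set.univ)
    (hk : (Cardinal.mk ι : WithTop Cardinal) < bS I I I)
    (f : ℕ → X → ℝ) (hf : ∀ n, Continuous (f n))
    (hqn : ∀ a : ι, ∃ e : ℕ → ℝ, (∀ n, 0 < e n) ∧
      (∀ ε : ℝ, 0 < ε → {n | ε ≤ e n} ∈ I) ∧
      ∀ x ∈ Xa a, {n | e n ≤ |f n x|} ∈ I) :
    ∃ e : ℕ → ℝ, (∀ n, 0 < e n) ∧ (∀ ε : ℝ, 0 < ε → {n | ε ≤ e n} ∈ I) ∧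
      ∀ x : X, {n | e n ≤ |f n x|} ∈ I :=
  stmt19_general I hI X ι Xa hcov hk f hqn
end
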